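/- Let d ≥ 2 and let K̄ be an algebraic closure of a number field K. For a ∈ K̄^×, let f_a(x) = a·x(x−1)(x−2)⋯(x−d+1) / ((x+1)(x+2)⋯(x+d−1)), a rational map of degree d on P^1 over K̄. Then for each fixed a ∈ K̄^×, there are only finitely many b ∈ K̄^× such that f_b is PGL_2(K̄)-conjugate to f_a, i.e., such that there exists φ ∈ PGL_2(K̄) with φ^{-1} ∘ f_a ∘ φ = f_b. -/

import Mathlib

open Polynomial
open scoped Classical

noncomputable section

/-- The projective line over `L`: `L` together with a point at infinity (`none`). -/
abbrev ProjLine (L : Type*) := Option L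

namespace ProjLine

variable {L : Type*} [Field L]

/-- Value of the rational map `p/q` at a finite point `x`. -/
def evalAt (p q : L[X]) (x : L) : ProjLine L :=
  if q.eval x = 0 then none else some (p.eval x / q.eval x)

/-- Value at a point of the projective line of the degree-`d` morphism whose
dehomogenized description is the pair `(p, q)` (i.e. the morphism
`[Y^d·p(X/Y) : Y^d·q(X/Y)]` in homogeneous coordinates). -/
def eval (d : ℕ) (p q : L[X]) : ProjLine L → ProjLine L
  | some x => evalAt p q x
  | none => evalAt (p.reflect d) (q.reflect d) 0

/-- Ramification index of `p/q` at a finite point `x`. -/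
def ramAt (p q : L[X]) (x : L) : ℕ :=
  if q.eval x = 0 then rootMultiplicity x q
  else rootMultiplicity x (C (q.eval x) * p - C (p.eval x) * q)

/-- Ramification index at a point of the projective line of the degree-`d` morphism
with dehomogenized description `(p, q)`. -/
def ram (d : ℕ) (p q : L[X]) : ProjLine L → ℕ
  | some x => ramAt p q x
  | none => ramAt (p.reflect d) (q.reflect d) 0

/-- The Möbius transformation of the projective line attached to a 2×2 matrix. -/
def mobius (M : Matrix (Fin 2) (Fin 2) L) : ProjLine L → ProjLine L
  | some x => if M 1 0 * x + M 1 1 = 0 then none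
      else some ((M 0 0 * x + M 0 1) / (M 1 0 * x + M 1 1))
  | none => if M 1 0 = 0 then none else some (M 0 0 / M 1 0)

/-- The Sylvester matrix of the binary forms of degrees `d` and `e` whose
dehomogenizations are `p` and `q`. -/
def sylvester (d e : ℕ) (p q : L[X]) : Matrix (Fin (e + d)) (Fin (e + d)) L :=
  Matrix.of fun i j =>
    if (i : ℕ) < e then
      (if (i : ℕ) ≤ (j : ℕ) ∧ (j : ℕ) ≤ (i : ℕ) + d then p.coeff (d + (i : ℕ) - (j : ℕ)) else 0)
    else
      (if (i : ℕ) - e ≤ (j : ℕ) ∧ (j : ℕ) ≤ ((i : ℕ) - e) + e then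
        q.coeff (e + ((i : ℕ) - e) - (j : ℕ)) else 0)

/-- The resultant of the binary forms of degrees `d` and `e` whose dehomogenizations
are `p` and `q`, as a Sylvester determinant. -/
def resultant (d e : ℕ) (p q : L[X]) : L := (sylvester d e p q).det

/-- Reduction of a point of the projective line over `L` modulo (the maximal ideal of)
a valuation subring `O` of `L`. -/
def red (O : ValuationSubring L) : ProjLine L → ProjLine (IsLocalRing.ResidueField ↥O)
  | some x => if h : x ∈ O then some (IsLocalRing.residue ↥O ⟨x, h⟩) else none
  | none => none

end ProjLine

/-- A pair of polynomials `(p, q)` over a field is the (dehomogenized) description of a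
morphism `P¹ → P¹` of degree `d`:  `p` and `q` are coprime, have degree at most `d`,
and at least one of them has degree exactly `d`. -/
def IsRatMapOfDeg {F : Type*} [Field F] (d : ℕ) (p q : F[X]) : Prop :=
  IsCoprime p q ∧ p.natDegree ≤ d ∧ q.natDegree ≤ d ∧ (p.natDegree = d ∨ q.natDegree = d)

open IsDedekindDomain NumberField

/-- The finite places of a number field `K`, i.e. the nonzero primes of its ring of
integers.  (Archimedean places impose no good-reduction conditions, so a finite set `S`
of places containing all archimedean ones is modelled by its finite set of
nonarchimedean members.) -/
abbrev NFPlace (K : Type*) [Field K] [NumberField K] := HeightOneSpectrum (𝓞 K)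

variable {K : Type*} [Field K] [NumberField K]

/-- `x ∈ R_S`: `x` is integral at every place outside `S`. -/
def SInteger (S : Set (NFPlace K)) (x : K) : Prop :=
  ∀ v : NFPlace K, v ∉ S → v.valuation K x ≤ 1

/-- `x ∈ R_S^×`: `x` is a unit at every place outside `S`. -/
def SUnit (S : Set (NFPlace K)) (x : K) : Prop :=
  x ≠ 0 ∧ ∀ v : NFPlace K, v ∉ S → v.valuation K x = 1

section Ext

variable {Kb : Type*} [Field Kb] [Algebra K Kb]

/-- A valuation subring `O` of an extension `Kb` of `K` lies over the place `v` of `K`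
if its restriction to `K` is exactly the valuation ring of `v`. -/
def LiesOver (O : ValuationSubring Kb) (v : NFPlace K) : Prop :=
  ∀ x : K, algebraMap K Kb x ∈ O ↔ v.valuation K x ≤ 1

/-- A set `X` of points of the projective line over an extension of `K` has good
reduction outside `S` if for every place `v ∉ S` and every extension of `v`
(i.e. every valuation subring lying over `v`), reduction is injective on `X`. -/
def GoodRedPoints (S : Set (NFPlace K)) (X : Set (ProjLine Kb)) : Prop :=
  ∀ v : NFPlace K, v ∉ S → ∀ O : ValuationSubring Kb, LiesOver O v →
    Set.InjOn (ProjLine.red O) X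

/-- `X` is stable under the action of `Gal(Kb/K)`. -/
def GalInvariant (X : Set (ProjLine Kb)) : Prop :=
  ∀ σ : Kb ≃ₐ[K] Kb, ∀ P ∈ X, Option.map (⇑σ) P ∈ X

end Ext

variable (K) in
/-- A triple `(f, Y, X)` consisting of (the dehomogenized description of) a rational
map and two sets of points of `P¹(K̄)`. -/
structure DynTriple where
  p : K[X]
  q : K[X]
  Y : Set (ProjLine (AlgebraicClosure K))
  X : Set (ProjLine (AlgebraicClosure K))

/-- Base change of a polynomial over `K` to the algebraic closure. -/
def polyBar (p : K[X]) : (AlgebraicClosure K)[X] := p.map (algebraMap K (AlgebraicClosure K))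

/-- Base change of a matrix over `K` to the algebraic closure. -/
def matBar (M : Matrix (Fin 2) (Fin 2) K) : Matrix (Fin 2) (Fin 2) (AlgebraicClosure K) :=
  M.map (algebraMap K (AlgebraicClosure K))

/-- `f` (given by the pair `(p,q)` of degree `d`) has simple good reduction outside `S`:
some `PGL₂(K)`-conjugate of `f` is given by a pair of `S`-integral polynomials whose
resultant is an `S`-unit. -/
def SimpleGoodRed (S : Set (NFPlace K)) (d : ℕ) (p q : K[X]) : Prop :=
  ∃ (M : Matrix (Fin 2) (Fin 2) K) (p' q' : K[X]),
    M.det ≠ 0 ∧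
    IsRatMapOfDeg d p' q' ∧
    (∀ n, SInteger S (p'.coeff n)) ∧ (∀ n, SInteger S (q'.coeff n)) ∧
    SUnit S (ProjLine.resultant d d p' q') ∧
    ∀ P : ProjLine K,
      ProjLine.mobius M (ProjLine.eval d p' q' P)
        = ProjLine.eval d p q (ProjLine.mobius M P)

/-- Membership in `𝐺𝑅̃¹_d[n](K,S)`:  `(f, Y, X)` with `f` of degree `d`, `X = Y ∪ f(Y)`
finite and Galois invariant, total ramification weight `n` on `Y`, and `X` of good
reduction outside `S`.  (No good-reduction requirement on `f` itself.) -/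
def MemGRtilde (S : Set (NFPlace K)) (d n : ℕ) (t : DynTriple K) : Prop :=
  IsRatMapOfDeg d t.p t.q ∧
  t.Y.Finite ∧
  t.X = t.Y ∪ (ProjLine.eval d (polyBar t.p) (polyBar t.q) '' t.Y) ∧
  GalInvariant (K := K) t.X ∧
  (∑ᶠ P ∈ t.Y, ProjLine.ram d (polyBar t.p) (polyBar t.q) P) = n ∧
  GoodRedPoints S t.X

/-- Membership in `𝐺𝑅¹_d[n](K,S)`: as in `MemGRtilde`, and in addition `f` has simple
good reduction outside `S`. -/
def MemGR (S : Set (NFPlace K)) (d n : ℕ) (t : DynTriple K) : Prop :=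
  MemGRtilde S d n t ∧ SimpleGoodRed S d t.p t.q

/-- Two triples are `PGL₂(R_S)`-equivalent:  `t' = φ⁻¹ ∘ t ∘ φ` for some `φ = M` with
`S`-integral entries and `S`-unit determinant. -/
def TripleEquiv (S : Set (NFPlace K)) (d : ℕ) (t t' : DynTriple K) : Prop :=
  ∃ M : Matrix (Fin 2) (Fin 2) K,
    (∀ i j, SInteger S (M i j)) ∧ SUnit S M.det ∧
    (∀ P, ProjLine.mobius (matBar M) (ProjLine.eval d (polyBar t'.p) (polyBar t'.q) P)
        = ProjLine.eval d (polyBar t.p) (polyBar t.q) (ProjLine.mobius (matBar M) P)) ∧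
    ProjLine.mobius (matBar M) '' t'.Y = t.Y ∧
    ProjLine.mobius (matBar M) '' t'.X = t.X

end

noncomputable section
open Polynomial

/-- Numerator `a·x(x-1)(x-2)⋯(x-d+1)` of the map `f_a` of Proposition 4.1. -/
def fNum (L : Type*) [Field L] (d : ℕ) (a : L) : L[X] :=
  C a * ∏ i ∈ Finset.range d, (X - C ((i : ℕ) : L))

/-- Denominator `(x+1)(x+2)⋯(x+d-1)` of the map `f_a` of Proposition 4.1. -/
def fDen (L : Type*) [Field L] (d : ℕ) : L[X] :=
  ∏ i ∈ Finset.range (d - 1), (X + C ((i + 1 : ℕ) : L))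

/-- The set `X = {0, ±1, ±2, …, ±(d-1)} ∪ {∞}` of `2d` points of Proposition 4.1. -/
def stdSet (L : Type*) [Field L] (d : ℕ) : Set (ProjLine L) :=
  insert (none : ProjLine L)
    ((fun m : ℤ => (some ((m : ℤ) : L) : ProjLine L)) '' Set.Icc (-(d : ℤ) + 1) ((d : ℤ) - 1))

end

noncomputable section
open Polynomial

/-!
A conjugacy `φ` from `f_b` to `f_a` sends the fixed points `0` and `∞` of `f_b` to fixed points
of `f_a`, and sends `1` (where `f_b(1) = 0`) to a point that `f_a` maps to a fixed point. As
`f_a` has finitely many such points, `φ` takes only finitely many values on `0, 1, ∞`, and these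
three values determine `φ`. Two parameters `b, b'` conjugated to `f_a` by the same `φ` have
`f_b = f_{b'}`, and `f_b(d) = b · c` with `c ≠ 0` recovers `b`.
-/

open Function

namespace ProjLine

variable {L : Type*} [Field L]

/-- The point with homogeneous coordinates `[w 0 : w 1]`, with junk value `∞` at `w = 0`. -/
def ofCoords (w : Fin 2 → L) : ProjLine L := if w 1 = 0 then none else some (w 0 / w 1)

def coords : ProjLine L → Fin 2 → L
  | some x => ![x, 1]
  | none => ![1, 0]

lemma coords_ne_zero (P : ProjLine L) : coords P ≠ 0 := by
  cases P with
  | none => simp [coords]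
  | some x => simp [coords]

lemma ofCoords_smul {c : L} (hc : c ≠ 0) (w : Fin 2 → L) : ofCoords (c • w) = ofCoords w := by
  simp only [ofCoords, Pi.smul_apply, smul_eq_mul, mul_eq_zero, hc, false_or,
    mul_div_mul_left _ _ hc]

lemma exists_coords_ofCoords {w : Fin 2 → L} (hw : w ≠ 0) :
    ∃ c : L, c ≠ 0 ∧ coords (ofCoords w) = c • w := by
  by_cases h1 : w 1 = 0
  · have h0 : w 0 ≠ 0 := fun h0 => hw (funext fun i => by fin_cases i <;> simp [h0, h1])
    refine ⟨(w 0)⁻¹, inv_ne_zero h0, funext fun i => ?_⟩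
    fin_cases i <;> simp [ofCoords, coords, h0, h1]
  · refine ⟨(w 1)⁻¹, inv_ne_zero h1, funext fun i => ?_⟩
    fin_cases i <;> simp [ofCoords, coords, h1, div_eq_inv_mul]

lemma mobius_eq_ofCoords (M : Matrix (Fin 2) (Fin 2) L) (P : ProjLine L) :
    mobius M P = ofCoords (M.mulVec (coords P)) := by
  cases P <;> simp [mobius, ofCoords, coords, Matrix.mulVec, dotProduct, Fin.sum_univ_two]

lemma mobius_mul (M : Matrix (Fin 2) (Fin 2) L) {N : Matrix (Fin 2) (Fin 2) L} (hN : N.det ≠ 0)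
    (P : ProjLine L) : mobius (M * N) P = mobius M (mobius N P) := by
  have hNP : N.mulVec (coords P) ≠ 0 := fun h =>
    coords_ne_zero P (Matrix.eq_zero_of_mulVec_eq_zero hN h)
  obtain ⟨c, hc, hcoords⟩ := exists_coords_ofCoords hNP
  rw [mobius_eq_ofCoords, mobius_eq_ofCoords, mobius_eq_ofCoords, hcoords, Matrix.mulVec_smul,
    ofCoords_smul hc, Matrix.mulVec_mulVec]

lemma mobius_one (P : ProjLine L) : mobius 1 P = P := by
  cases P <;> simp [mobius]

lemma mobius_injective {M : Matrix (Fin 2) (Fin 2) L} (hM : M.det ≠ 0) :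
    Injective (mobius M) := by
  have hMinv : M⁻¹ * M = 1 := Matrix.nonsing_inv_mul M (isUnit_iff_ne_zero.mpr hM)
  intro P Q h
  simpa only [← mobius_mul _ hM, hMinv, mobius_one] using congrArg (mobius M⁻¹) h

lemma mobius_eq_id_of_isFixedPt {N : Matrix (Fin 2) (Fin 2) L}
    (h0 : IsFixedPt (mobius N) (some 0)) (h1 : IsFixedPt (mobius N) (some 1))
    (hinf : IsFixedPt (mobius N) none) : mobius N = id := by
  have hN10 : N 1 0 = 0 := by
    by_contra h
    simp [IsFixedPt, mobius, h] at hinf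
  have hN11 : N 1 1 ≠ 0 := by
    intro h
    simp [IsFixedPt, mobius, h] at h0
  have hN01 : N 0 1 = 0 := by simpa [IsFixedPt, mobius, hN11] using h0
  have hN00 : N 0 0 = N 1 1 := by
    simpa [IsFixedPt, mobius, hN10, hN01, hN11, div_eq_one_iff_eq] using h1
  funext P
  cases P <;> simp [mobius, hN10, hN01, hN00, hN11]

lemma mobius_eq_of_eq_zero_one_none {M M' : Matrix (Fin 2) (Fin 2) L} (hM : M.det ≠ 0)
    (hM' : M'.det ≠ 0) (h0 : mobius M (some 0) = mobius M' (some 0))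
    (h1 : mobius M (some 1) = mobius M' (some 1)) (hinf : mobius M none = mobius M' none) :
    mobius M = mobius M' := by
  set N := M'⁻¹ * M
  have hM'N : M' * N = M := by
    rw [← Matrix.mul_assoc, Matrix.mul_nonsing_inv M' (isUnit_iff_ne_zero.mpr hM'),
      Matrix.one_mul]
  have hN : N.det ≠ 0 := by
    simpa [N, Matrix.det_mul, Matrix.det_nonsing_inv] using ⟨hM', hM⟩
  have hfix : ∀ P, mobius M P = mobius M' P → IsFixedPt (mobius N) P := fun P h =>
    mobius_injective hM' (by rw [← mobius_mul _ hN, hM'N, h])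
  have hNid := mobius_eq_id_of_isFixedPt (hfix _ h0) (hfix _ h1) (hfix _ hinf)
  funext P
  rw [← hM'N, mobius_mul _ hN, hNid, id]

theorem finite_setOf_semiconj_mobius {ι : Type*} {f : ProjLine L → ProjLine L}
    {g : ι → ProjLine L → ProjLine L} (hg : Injective g) (hfix : (fixedPoints f).Finite)
    (hpre : (f ⁻¹' fixedPoints f).Finite) (h0 : ∀ i, IsFixedPt (g i) (some 0))
    (hinf : ∀ i, IsFixedPt (g i) none) (h1 : ∀ i, g i (some 1) = some 0) :
    {i | ∃ M : Matrix (Fin 2) (Fin 2) L, M.det ≠ 0 ∧ Semiconj (mobius M) (g i) f}.Finite := by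
  choose! M hM hMg using fun i (hi : i ∈ {i | ∃ M : Matrix (Fin 2) (Fin 2) L,
    M.det ≠ 0 ∧ Semiconj (mobius M) (g i) f}) => hi
  refine Set.Finite.of_injOn
    (f := fun i => (mobius (M i) (some 0), mobius (M i) none, mobius (M i) (some 1)))
    (fun i hi => Set.mk_mem_prod ((h0 i).map (hMg i hi))
      (Set.mk_mem_prod ((hinf i).map (hMg i hi)) ?_)) (fun i hi j hj hij => ?_)
    (hfix.prod (hfix.prod hpre))
  · show IsFixedPt f (f (mobius (M i) (some 1)))
    rw [← (hMg i hi).eq, h1]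
    exact (h0 i).map (hMg i hi)
  · simp only [Prod.mk.injEq] at hij
    have hMM := mobius_eq_of_eq_zero_one_none (hM i hi) (hM j hj) hij.1 hij.2.2 hij.2.1
    refine hg (funext fun P => mobius_injective (hM i hi) ?_)
    rw [(hMg i hi).eq, hMM, ← (hMg j hj).eq]

lemma eval_some_of_eval_ne_zero {d : ℕ} {p q : L[X]} {x : L} (hx : q.eval x ≠ 0) :
    eval d p q (some x) = some (p.eval x / q.eval x) := by
  simp [eval, evalAt, hx]

lemma eval_none_of_coeff_eq_zero {d : ℕ} {p q : L[X]} (hq : q.coeff d = 0) :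
    eval d p q none = none := by
  simp [eval, evalAt, ← coeff_zero_eq_eval_zero, coeff_reflect, hq]

lemma finite_setOf_evalAt_eq {p q : L[X]} (hq : q ≠ 0) (hpq : ¬ q ∣ p) (Q : ProjLine L) :
    {x | evalAt p q x = Q}.Finite := by
  cases Q with
  | none =>
    refine (finite_setOfPred_isRoot hq).subset fun x hx => ?_
    by_contra h
    simp_all [evalAt]
  | some y =>
    have hpy : p - C y * q ≠ 0 := fun h => hpq ⟨C y, by rw [mul_comm]; exact sub_eq_zero.mp h⟩
    refine (finite_setOfPred_isRoot hpy).subset fun x hx => ?_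
    by_cases h : q.eval x = 0
    · simp [evalAt, h] at hx
    · simp only [evalAt, h, if_false, Option.some.injEq, Set.mem_ofPred_eq] at hx
      simp [← hx, h]

lemma finite_preimage_eval (d : ℕ) {p q : L[X]} (hq : q ≠ 0) (hpq : ¬ q ∣ p)
    {T : Set (ProjLine L)} (hT : T.Finite) : (eval d p q ⁻¹' T).Finite := by
  refine Set.finite_option.mpr ((hT.biUnion fun Q _ => finite_setOf_evalAt_eq hq hpq Q).subset ?_)
  intro x hx
  exact Set.mem_biUnion hx rfl

lemma finite_fixedPoints_eval (d : ℕ) {p q : L[X]} (hpq : ¬ q ∣ p) :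
    (fixedPoints (eval d p q)).Finite := by
  have hpX : p - X * q ≠ 0 := fun h => hpq ⟨X, by rw [mul_comm]; exact sub_eq_zero.mp h⟩
  refine Set.finite_option.mpr ((finite_setOfPred_isRoot hpX).subset fun x hx => ?_)
  by_cases h : q.eval x = 0
  · simp [mem_fixedPoints, IsFixedPt, eval, evalAt, h] at hx
  · simp only [Set.mem_ofPred_eq, mem_fixedPoints, IsFixedPt, eval_some_of_eval_ne_zero h,
      Option.some.injEq, div_eq_iff h] at hx
    simp [hx]

end ProjLine

section fMaps

variable {L : Type*} [Field L] {d : ℕ}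

lemma eval_fNum (b x : L) : (fNum L d b).eval x = b * ∏ i ∈ Finset.range d, (x - i) := by
  simp [fNum, eval_prod]

lemma eval_fDen (x : L) : (fDen L d).eval x = ∏ i ∈ Finset.range (d - 1), (x + (i + 1 : ℕ)) := by
  simp [fDen, eval_prod]

lemma fDen_eval_natCast_ne_zero [CharZero L] (n : ℕ) : (fDen L d).eval (n : L) ≠ 0 := by
  rw [eval_fDen, Finset.prod_ne_zero_iff]
  intro i _
  exact_mod_cast Nat.succ_ne_zero (n + i)

lemma fDen_ne_zero [CharZero L] : fDen L d ≠ 0 := fun h => by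
  simpa [h] using fDen_eval_natCast_ne_zero (L := L) (d := d) 0

lemma fDen_eval_neg_one (hd : 2 ≤ d) : (fDen L d).eval (-1) = 0 := by
  rw [eval_fDen]
  exact Finset.prod_eq_zero (Finset.mem_range.mpr (by omega : 0 < d - 1)) (by simp)

lemma fNum_eval_neg_one_ne_zero [CharZero L] {b : L} (hb : b ≠ 0) : (fNum L d b).eval (-1) ≠ 0 := by
  rw [eval_fNum]
  refine mul_ne_zero hb (Finset.prod_ne_zero_iff.mpr fun i _ => ?_)
  have hi : ((i + 1 : ℕ) : L) ≠ 0 := Nat.cast_ne_zero.mpr i.succ_ne_zero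
  contrapose! hi
  push_cast
  linear_combination -hi

lemma fDen_not_dvd_fNum [CharZero L] (hd : 2 ≤ d) {b : L} (hb : b ≠ 0) :
    ¬ fDen L d ∣ fNum L d b := fun h => by
  simpa [fDen_eval_neg_one hd, fNum_eval_neg_one_ne_zero hb] using eval_dvd (x := -1) h

lemma fDen_natDegree : (fDen L d).natDegree = d - 1 := by
  rw [fDen, natDegree_prod _ _ fun i _ => X_add_C_ne_zero _]
  simp only [natDegree_X_add_C]
  simp

lemma eval_fNum_fDen_natCast_of_lt [CharZero L] (b : L) {k : ℕ} (hk : k < d) :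
    ProjLine.eval d (fNum L d b) (fDen L d) (some k) = some 0 := by
  rw [ProjLine.eval_some_of_eval_ne_zero (fDen_eval_natCast_ne_zero k), eval_fNum,
    Finset.prod_eq_zero (Finset.mem_range.mpr hk) (sub_self _)]
  simp

lemma eval_fNum_fDen_none (hd : 2 ≤ d) (b : L) :
    ProjLine.eval d (fNum L d b) (fDen L d) none = none :=
  ProjLine.eval_none_of_coeff_eq_zero
    (coeff_eq_zero_of_natDegree_lt (by rw [fDen_natDegree]; omega))

lemma eval_fNum_fDen_injective [CharZero L] (d : ℕ) :
    Injective fun b : L => ProjLine.eval d (fNum L d b) (fDen L d) := by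
  intro b b' h
  have hd := congrFun h (some d)
  have hc : ∏ i ∈ Finset.range d, ((d : L) - i) ≠ 0 :=
    Finset.prod_ne_zero_iff.mpr fun i hi => sub_ne_zero.mpr
      (Nat.cast_injective.ne (Finset.mem_range.mp hi).ne')
  simp only [ProjLine.eval_some_of_eval_ne_zero (fDen_eval_natCast_ne_zero d), eval_fNum,
    Option.some.injEq, div_left_inj' (fDen_eval_natCast_ne_zero (L := L) (d := d) d)] at hd
  exact mul_right_cancel₀ hc hd

end fMaps

theorem fa_conjugates_finite_general
    (L : Type*) [Field L] [CharZero L]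
    (d : ℕ) (hd : 2 ≤ d) (a : L) (ha : a ≠ 0) :
    {b : L | b ≠ 0 ∧ ∃ M : Matrix (Fin 2) (Fin 2) L, M.det ≠ 0 ∧
      ∀ P : ProjLine L,
        ProjLine.mobius M (ProjLine.eval d (fNum L d b) (fDen L d) P)
          = ProjLine.eval d (fNum L d a) (fDen L d) (ProjLine.mobius M P)}.Finite := by
  have hpq := fDen_not_dvd_fNum hd ha
  have hfix := ProjLine.finite_fixedPoints_eval d hpq
  have hzero (b : L) : ProjLine.eval d (fNum L d b) (fDen L d) (some 0) = some 0 := by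
    simpa using eval_fNum_fDen_natCast_of_lt b (k := 0) (by omega)
  have hone (b : L) : ProjLine.eval d (fNum L d b) (fDen L d) (some 1) = some 0 := by
    simpa using eval_fNum_fDen_natCast_of_lt b (k := 1) (by omega)
  refine (ProjLine.finite_setOf_semiconj_mobius (eval_fNum_fDen_injective d) hfix
    (ProjLine.finite_preimage_eval d fDen_ne_zero hpq hfix) hzero
    (eval_fNum_fDen_none hd) hone).subset ?_
  exact fun b hb => hb.2

/-- **Proposition 4.1(b).**  Over an algebraically closed field of characteristic `0`,
for each fixed `a ≠ 0` there are only finitely many `b ≠ 0` such that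
`f_b(x) = b·x(x-1)⋯(x-d+1)/((x+1)⋯(x+d-1))` is `PGL₂`-conjugate to `f_a`. -/
theorem fa_conjugates_finite
    (L : Type*) [Field L] [IsAlgClosed L] [CharZero L]
    (d : ℕ) (hd : 2 ≤ d) (a : L) (ha : a ≠ 0) :
    {b : L | b ≠ 0 ∧ ∃ M : Matrix (Fin 2) (Fin 2) L, M.det ≠ 0 ∧
      ∀ P : ProjLine L,
        ProjLine.mobius M (ProjLine.eval d (fNum L d b) (fDen L d) P)
          = ProjLine.eval d (fNum L d a) (fDen L d) (ProjLine.mobius M P)}.Finite :=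
  fa_conjugates_finite_general L d hd a ha

end
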